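/- Let H̃ = p₁² + p₂² + (a·q₁ + b)·q₂^(-2/3) on q₂ > 0. The three functions H̃, Z̃₃ = p₁(2p₁²+3p₂²) + (3a/2)(2p₁q₁+3p₂q₂)q₂^(-2/3) + 3b·p₁·q₂^(-2/3), and Z̃₄ = p₁²(p₁²+2p₂²) + 2a·p₁(p₁q₁+3p₂q₂)q₂^(-2/3) + 2b·p₁²·q₂^(-2/3) + (9a²/2)q₂^(2/3) are functionally independent at generic points when a ≠ 0; specifically, there exists a point of the phase space with q₂ > 0 at which the differentials dH̃, dZ̃₃, dZ̃₄ are linearly independent. -/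
import Mathlib


/-- Gradient (differential) in ℝ⁴ as a vector of the four partial derivatives. -/
noncomputable def grad (F : ℝ → ℝ → ℝ → ℝ → ℝ) (q1 q2 p1 p2 : ℝ) : Fin 4 → ℝ :=
  ![deriv (fun x => F x q2 p1 p2) q1,
    deriv (fun x => F q1 x p1 p2) q2,
    deriv (fun x => F q1 q2 x p2) p1,
    deriv (fun x => F q1 q2 p1 x) p2]

noncomputable def Ht (a b : ℝ) (q1 q2 p1 p2 : ℝ) : ℝ :=
  p1 ^ 2 + p2 ^ 2 + (a * q1 + b) * q2 ^ (-(2 : ℝ) / 3)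

noncomputable def Z3 (a b : ℝ) (q1 q2 p1 p2 : ℝ) : ℝ :=
  p1 * (2 * p1 ^ 2 + 3 * p2 ^ 2)
  + (3 * a / 2) * (2 * p1 * q1 + 3 * p2 * q2) * q2 ^ (-(2 : ℝ) / 3)
  + 3 * b * p1 * q2 ^ (-(2 : ℝ) / 3)

noncomputable def Z4 (a b : ℝ) (q1 q2 p1 p2 : ℝ) : ℝ :=
  p1 ^ 2 * (p1 ^ 2 + 2 * p2 ^ 2)
  + 2 * a * p1 * (p1 * q1 + 3 * p2 * q2) * q2 ^ (-(2 : ℝ) / 3)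
  + 2 * b * p1 ^ 2 * q2 ^ (-(2 : ℝ) / 3)
  + (9 * a ^ 2 / 2) * q2 ^ ((2 : ℝ) / 3)

lemma hd_rpow (r : ℝ) : HasDerivAt (fun x : ℝ => x ^ r) r 1 := by
  have := Real.hasDerivAt_rpow_const (p := r) (x := (1:ℝ)) (Or.inl one_ne_zero)
  simpa using this

lemma hd_mul_rpow : HasDerivAt (fun x : ℝ => x * x ^ (-(2:ℝ)/3)) (1/3) 1 := by
  have h := (hasDerivAt_id (1:ℝ)).mul (hd_rpow (-(2:ℝ)/3))
  exact h.congr_deriv (by norm_num [Real.one_rpow])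

section pt
variable (a b : ℝ)

lemma gradHt : grad (Ht a b) (-b/a) 1 0 1 =
    ![a, (a * (-b/a) + b) * (-2/3), 0, 2] := by
  have e0 : HasDerivAt (fun x : ℝ => (0:ℝ)^2 + 1^2 + (a*x+b) * (1:ℝ)^(-(2:ℝ)/3)) a (-b/a) :=
    (((((hasDerivAt_id (-b/a)).const_mul a).add_const b).mul_const _).const_add _).congr_deriv
      (by rw [Real.one_rpow]; ring)
  have e1 : HasDerivAt (fun x : ℝ => (0:ℝ)^2 + 1^2 + (a*(-b/a)+b) * x ^ (-(2:ℝ)/3))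
      ((a * (-b/a) + b) * (-2/3)) 1 :=
    (((hd_rpow _).const_mul _).const_add _).congr_deriv (by ring)
  have e2 : HasDerivAt (fun x : ℝ => x^2 + 1^2 + (a*(-b/a)+b) * (1:ℝ)^(-(2:ℝ)/3)) 0 (0:ℝ) :=
    (((hasDerivAt_pow 2 (0:ℝ)).add_const _).add_const _).congr_deriv (by norm_num)
  have e3 : HasDerivAt (fun x : ℝ => (0:ℝ)^2 + x^2 + (a*(-b/a)+b) * (1:ℝ)^(-(2:ℝ)/3)) 2 (1:ℝ) :=
    (((hasDerivAt_pow 2 (1:ℝ)).const_add _).add_const _).congr_deriv (by norm_num)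
  simp only [grad, Ht]
  rw [e0.deriv, e1.deriv, e2.deriv, e3.deriv]

lemma gradZ3 : grad (Z3 a b) (-b/a) 1 0 1 =
    ![0, 3*a/2, 3 + 3*a*(-b/a) + 3*b, 9*a/2] := by
  have c0 : (fun x : ℝ => (0:ℝ) * (2 * 0 ^ 2 + 3 * 1 ^ 2)
      + 3 * a / 2 * (2 * 0 * x + 3 * 1 * 1) * (1:ℝ) ^ (-(2:ℝ) / 3)
      + 3 * b * 0 * (1:ℝ) ^ (-(2:ℝ) / 3))
      = (fun _ : ℝ => 3 * a / 2 * (3 * (1:ℝ) ^ (-(2:ℝ) / 3))) := by funext x; ring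
  have c1 : (fun x : ℝ => (0:ℝ) * (2 * 0 ^ 2 + 3 * 1 ^ 2)
      + 3 * a / 2 * (2 * 0 * (-b/a) + 3 * 1 * x) * x ^ (-(2:ℝ) / 3)
      + 3 * b * 0 * x ^ (-(2:ℝ) / 3))
      = (fun x : ℝ => 9 * a / 2 * (x * x ^ (-(2:ℝ) / 3))) := by funext x; ring
  have e1 : HasDerivAt (fun x : ℝ => 9 * a / 2 * (x * x ^ (-(2:ℝ) / 3))) (3*a/2) 1 :=
    (hd_mul_rpow.const_mul _).congr_deriv (by ring)
  have c2 : (fun x : ℝ => x * (2 * x ^ 2 + 3 * 1 ^ 2)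
      + 3 * a / 2 * (2 * x * (-b/a) + 3 * 1 * 1) * (1:ℝ) ^ (-(2:ℝ) / 3)
      + 3 * b * x * (1:ℝ) ^ (-(2:ℝ) / 3))
      = (fun x : ℝ => 2 * x ^ 3 + (3 + 3*a*(-b/a) + 3*b) * x + 9 * a / 2) := by
    funext x; simp only [Real.one_rpow]; ring
  have e2 : HasDerivAt (fun x : ℝ => 2 * x ^ 3 + (3 + 3*a*(-b/a) + 3*b) * x + 9 * a / 2)
      (3 + 3*a*(-b/a) + 3*b) (0:ℝ) :=
    ((((hasDerivAt_pow 3 (0:ℝ)).const_mul 2).add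
      ((hasDerivAt_id (0:ℝ)).const_mul _)).add_const _).congr_deriv (by norm_num)
  have c3 : (fun x : ℝ => (0:ℝ) * (2 * 0 ^ 2 + 3 * x ^ 2)
      + 3 * a / 2 * (2 * 0 * (-b/a) + 3 * x * 1) * (1:ℝ) ^ (-(2:ℝ) / 3)
      + 3 * b * 0 * (1:ℝ) ^ (-(2:ℝ) / 3))
      = (fun x : ℝ => 9 * a / 2 * x) := by
    funext x; simp only [Real.one_rpow]; ring
  have e3 : HasDerivAt (fun x : ℝ => 9 * a / 2 * x) (9*a/2) (1:ℝ) :=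
    ((hasDerivAt_id (1:ℝ)).const_mul _).congr_deriv (by norm_num)
  simp only [grad, Z3]
  rw [c0, c1, c2, c3, deriv_const', e1.deriv, e2.deriv, e3.deriv]

lemma gradZ4 : grad (Z4 a b) (-b/a) 1 0 1 = ![0, 3*a^2, 6*a, 0] := by
  have c0 : (fun x : ℝ => (0:ℝ) ^ 2 * (0 ^ 2 + 2 * 1 ^ 2)
      + 2 * a * 0 * (0 * x + 3 * 1 * 1) * (1:ℝ) ^ (-(2:ℝ) / 3)
      + 2 * b * 0 ^ 2 * (1:ℝ) ^ (-(2:ℝ) / 3) + 9 * a ^ 2 / 2 * (1:ℝ) ^ ((2:ℝ) / 3))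
      = (fun _ : ℝ => 9 * a ^ 2 / 2 * (1:ℝ) ^ ((2:ℝ) / 3)) := by funext x; ring
  have c1 : (fun x : ℝ => (0:ℝ) ^ 2 * (0 ^ 2 + 2 * 1 ^ 2)
      + 2 * a * 0 * (0 * (-b/a) + 3 * 1 * x) * x ^ (-(2:ℝ) / 3)
      + 2 * b * 0 ^ 2 * x ^ (-(2:ℝ) / 3) + 9 * a ^ 2 / 2 * x ^ ((2:ℝ) / 3))
      = (fun x : ℝ => 9 * a ^ 2 / 2 * x ^ ((2:ℝ) / 3)) := by funext x; ring
  have e1 : HasDerivAt (fun x : ℝ => 9 * a ^ 2 / 2 * x ^ ((2:ℝ) / 3)) (3*a^2) 1 :=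
    ((hd_rpow ((2:ℝ)/3)).const_mul _).congr_deriv (by ring)
  have c2 : (fun x : ℝ => x ^ 2 * (x ^ 2 + 2 * 1 ^ 2)
      + 2 * a * x * (x * (-b/a) + 3 * 1 * 1) * (1:ℝ) ^ (-(2:ℝ) / 3)
      + 2 * b * x ^ 2 * (1:ℝ) ^ (-(2:ℝ) / 3) + 9 * a ^ 2 / 2 * (1:ℝ) ^ ((2:ℝ) / 3))
      = (fun x : ℝ => x ^ 4 + (2 + 2*a*(-b/a) + 2*b) * x ^ 2 + 6 * a * x + 9 * a ^ 2 / 2) := by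
    funext x; simp only [Real.one_rpow]; ring
  have e2 : HasDerivAt
      (fun x : ℝ => x ^ 4 + (2 + 2*a*(-b/a) + 2*b) * x ^ 2 + 6 * a * x + 9 * a ^ 2 / 2)
      (6*a) (0:ℝ) :=
    ((((hasDerivAt_pow 4 (0:ℝ)).add ((hasDerivAt_pow 2 (0:ℝ)).const_mul _)).add
      ((hasDerivAt_id (0:ℝ)).const_mul _)).add_const _).congr_deriv (by norm_num)
  have c3 : (fun x : ℝ => (0:ℝ) ^ 2 * (0 ^ 2 + 2 * x ^ 2)
      + 2 * a * 0 * (0 * (-b/a) + 3 * x * 1) * (1:ℝ) ^ (-(2:ℝ) / 3)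
      + 2 * b * 0 ^ 2 * (1:ℝ) ^ (-(2:ℝ) / 3) + 9 * a ^ 2 / 2 * (1:ℝ) ^ ((2:ℝ) / 3))
      = (fun _ : ℝ => 9 * a ^ 2 / 2 * (1:ℝ) ^ ((2:ℝ) / 3)) := by funext x; ring
  simp only [grad, Z4]
  rw [c0, c1, c2, c3, e1.deriv, e2.deriv]
  simp

end pt

theorem stmt4 (a b : ℝ) (ha : a ≠ 0) :
    ∃ q1 q2 p1 p2 : ℝ, 0 < q2 ∧
      LinearIndependent ℝ
        ![grad (Ht a b) q1 q2 p1 p2,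
          grad (Z3 a b) q1 q2 p1 p2,
          grad (Z4 a b) q1 q2 p1 p2] := by
  refine ⟨-b/a, 1, 0, 1, one_pos, ?_⟩
  have hq : a * (-b/a) + b = 0 := by field_simp; ring
  rw [gradHt, gradZ3, gradZ4, hq]
  have h2 : 3 + 3*a*(-b/a) + 3*b = 3 := by field_simp; ring
  rw [h2]
  rw [Fintype.linearIndependent_iff]
  intro g hg
  have h0 := congrFun hg 0
  have h1 := congrFun hg 2
  have h3 := congrFun hg 3
  simp only [Fin.sum_univ_three, Matrix.cons_val_zero, Matrix.cons_val_one, Matrix.head_cons,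
    Matrix.cons_val_two, Matrix.tail_cons, Matrix.cons_val_three, Matrix.head_fin_const,
    Pi.add_apply, Pi.smul_apply, Matrix.cons_val', Matrix.cons_val_fin_one, Matrix.empty_val',
    smul_eq_mul, Pi.zero_apply] at h0 h1 h3
  have hg0 : g 0 = 0 := by
    have h : g 0 * a = 0 := by linarith
    exact (mul_eq_zero.1 h).resolve_right ha
  have hg1 : g 1 = 0 := by
    have h : g 1 * (9 * a / 2) = 0 := by rw [hg0] at h3; linarith
    have h9 : (9 : ℝ) * a / 2 ≠ 0 := by
      simp only [ne_eq, div_eq_zero_iff, mul_eq_zero]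
      push_neg; exact ⟨⟨by norm_num, ha⟩, by norm_num⟩
    exact (mul_eq_zero.1 h).resolve_right h9
  have hg2 : g 2 = 0 := by
    have h : g 2 * (6 * a) = 0 := by rw [hg1] at h1; linarith
    have h6 : (6 : ℝ) * a ≠ 0 := by
      simp only [ne_eq, mul_eq_zero]; push_neg; exact ⟨by norm_num, ha⟩
    exact (mul_eq_zero.1 h).resolve_right h6
  intro i; fin_cases i <;> assumption
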